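/- arXiv:1908.03986 — 2 statements merged into one kernel-verified Lean document; each statement's English description precedes it below -/
import Mathlib

section
/- The Schouten–Nijenhuis bracket of the bivector π_B = Σᵢ ∂/∂xᵢ ∧ ∂/∂pᵢ + x₂² ∂/∂p₂ ∧ ∂/∂p₃ + x₁x₂ ∂/∂p₁ ∧ ∂/∂p₃ with itself equals [π_B, π_B] = 2x₁ ∂/∂p₁ ∧ ∂/∂p₂ ∧ ∂/∂p₃. In particular, π_B is not a Poisson bivector since its jacobiator is nonzero wherever x₁ ≠ 0. -/
open scoped BigOperators

noncomputable section

/-- Phase space ℝ⁶ with coordinates (x₁,x₂,x₃,p₁,p₂,p₃) indexed by 0,…,5. -/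
abbrev M6 := Fin 6 → ℝ

/-- Partial derivative in the `i`-th coordinate direction. -/
def pd (i : Fin 6) (F : M6 → ℝ) (m : M6) : ℝ := fderiv ℝ F m (Pi.single i 1)

/-- Kronecker delta, viewed as the components of the coordinate 1-form `dx_a`. -/
def dd (a i : Fin 6) : ℝ := if a = i then 1 else 0

/-- Components of `dx_a ∧ dx_b` (equivalently of `∂_a ∧ ∂_b`). -/
def w2 (a b i j : Fin 6) : ℝ := dd a i * dd b j - dd a j * dd b i

/-- Components of `dx_a ∧ dx_b ∧ dx_c` (equivalently of `∂_a ∧ ∂_b ∧ ∂_c`). -/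
def w3 (a b c i j k : Fin 6) : ℝ :=
  dd a i * (dd b j * dd c k - dd b k * dd c j)
    - dd a j * (dd b i * dd c k - dd b k * dd c i)
    + dd a k * (dd b i * dd c j - dd b j * dd c i)

/-- Components of the 2-form ω_B = Σᵢ dxᵢ∧dpᵢ + x₂² dx₂∧dx₃ + x₁x₂ dx₁∧dx₃. -/
def ωB (m : M6) (i j : Fin 6) : ℝ :=
  w2 0 3 i j + w2 1 4 i j + w2 2 5 i j
    + (m 1) ^ 2 * w2 1 2 i j + m 0 * m 1 * w2 0 2 i j

/-- Components of the bivector π_B = Σᵢ ∂xᵢ∧∂pᵢ + x₂² ∂p₂∧∂p₃ + x₁x₂ ∂p₁∧∂p₃. -/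
def πB (m : M6) (i j : Fin 6) : ℝ :=
  w2 0 3 i j + w2 1 4 i j + w2 2 5 i j
    + (m 1) ^ 2 * w2 4 5 i j + m 0 * m 1 * w2 3 5 i j

/-- Components of the Schouten–Nijenhuis bracket `[π,π]` of a bivector field. -/
def sch (π : M6 → Fin 6 → Fin 6 → ℝ) (m : M6) (i j k : Fin 6) : ℝ :=
  2 * ∑ l, (π m i l * pd l (fun x => π x j k) m
      + π m j l * pd l (fun x => π x k i) m
      + π m k l * pd l (fun x => π x i j) m)

/-!
Only the coefficients x₂² and x₁x₂ of π_B are non-constant, and they depend on x₁, x₂ alone.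
The entries of π_B that contract with ∂/∂x₁ and ∂/∂x₂ are the constant ones, π^{i x₁} = -δ_{i p₁}
and π^{i x₂} = -δ_{i p₂}, so each term of [π_B, π_B]^{ijk} is a Kronecker delta times a derivative
of a coefficient. Summing cyclically turns δ_{ai} (∂_b ∧ ∂_c)^{jk} into (∂_a ∧ ∂_b ∧ ∂_c)^{ijk};
the x₂-terms then carry a repeated index and vanish, leaving 2x₁ ∂/∂p₁ ∧ ∂/∂p₂ ∧ ∂/∂p₃.
-/

lemma fderiv_coord_apply_single (a l : Fin 6) (m : M6) :
    fderiv ℝ (fun x : M6 => x a) m (Pi.single l 1) = dd a l := by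
  rw [(hasFDerivAt_apply a m).fderiv]
  simp only [ContinuousLinearMap.proj_apply, Pi.single_apply, dd]

lemma pd_πB (l j k : Fin 6) (m : M6) :
    pd l (fun x => πB x j k) m =
      dd 0 l * (m 1 * w2 3 5 j k) + dd 1 l * (2 * m 1 * w2 4 5 j k + m 0 * w2 3 5 j k) := by
  unfold pd πB
  rw [fderiv_fun_add (by fun_prop) (by fun_prop), fderiv_const_add,
    fderiv_mul_const (by fun_prop), fderiv_mul_const (by fun_prop),
    fderiv_fun_mul (by fun_prop) (by fun_prop), fderiv_fun_pow _ (by fun_prop)]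
  simp only [add_apply, smul_apply, fderiv_coord_apply_single, smul_eq_mul]
  ring

lemma πB_apply_zero_right (m : M6) (i : Fin 6) : πB m i 0 = -dd 3 i := by
  fin_cases i <;> simp [πB, w2, dd]

lemma πB_apply_one_right (m : M6) (i : Fin 6) : πB m i 1 = -dd 4 i := by
  fin_cases i <;> simp [πB, w2, dd]

lemma sum_mul_dd_mul (f : Fin 6 → ℝ) (a : Fin 6) (c : ℝ) : ∑ l, f l * (dd a l * c) = f a * c := by
  simp [dd]

lemma sum_πB_mul_pd_πB (m : M6) (i j k : Fin 6) :
    ∑ l, πB m i l * pd l (fun x => πB x j k) m =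
      -(dd 3 i * (m 1 * w2 3 5 j k) + dd 4 i * (2 * m 1 * w2 4 5 j k + m 0 * w2 3 5 j k)) := by
  simp only [pd_πB, mul_add, Finset.sum_add_distrib, sum_mul_dd_mul, πB_apply_zero_right,
    πB_apply_one_right]
  ring

lemma sch_πB (m : M6) (i j k : Fin 6) : sch πB m i j k = 2 * m 0 * w3 3 4 5 i j k := by
  simp only [sch, Finset.sum_add_distrib, sum_πB_mul_pd_πB]
  simp only [w3, w2]
  ring

/-- `[π_B,π_B] = 2x₁ ∂p₁∧∂p₂∧∂p₃`; in particular π_B is not Poisson, since its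
jacobiator is nonzero wherever x₁ ≠ 0. -/
theorem schouten_piB :
    (∀ m : M6, ∀ i j k, sch πB m i j k = 2 * m 0 * w3 3 4 5 i j k) ∧
    (∀ m : M6, m 0 ≠ 0 → ∃ i j k, sch πB m i j k ≠ 0) := by
  refine ⟨sch_πB, fun m hm => ⟨3, 4, 5, ?_⟩⟩
  have hw : w3 3 4 5 3 4 5 = 1 := by simp [w3, dd]
  rw [sch_πB, hw]
  simpa using hm

end
end

section
/- The integral of the function x₁² over one period of the closed orbit t ↦ (r cos t, r sin t, c₃, s cos(t+θ), s sin(t+θ), c₆) of H_f equals π r², which is strictly positive whenever r ≠ 0. Consequently, the function g = x₁² is not of the form H_f(h) for any smooth function h on ℝ⁶. -/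
open scoped BigOperators

noncomputable section

/-- The vector field H_f = x₁∂x₂ − x₂∂x₁ + p₁∂p₂ − p₂∂p₁ on ℝ⁶. -/
def HfV (m : M6) : M6 := ![-(m 1), m 0, 0, -(m 4), m 3, 0]

/-- The closed orbit of H_f through (r,0,c₃,s cos θ, s sin θ, c₆). -/
def orbit (r c₃ s θ c₆ : ℝ) (t : ℝ) : M6 :=
  ![r * Real.cos t, r * Real.sin t, c₃,
    s * Real.cos (t + θ), s * Real.sin (t + θ), c₆]

lemma clm_sum (L : M6 →L[ℝ] ℝ) (v : M6) : L v = ∑ i, v i * L (Pi.single i 1) := by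
  have hv : v = ∑ i, v i • (Pi.single i 1 : M6) := by
    ext j
    simp [Finset.sum_apply, Pi.single_apply]
  conv_lhs => rw [hv]
  simp [smul_eq_mul]

lemma orbit_hasDerivAt (r c₃ s θ c₆ t : ℝ) :
    HasDerivAt (orbit r c₃ s θ c₆) (HfV (orbit r c₃ s θ c₆ t)) t := by
  rw [hasDerivAt_pi]
  intro i
  fin_cases i
  · -- r * cos t, derivative -(r * sin t)
    have := (Real.hasDerivAt_cos t).const_mul r
    simpa [orbit, HfV, mul_comm, mul_assoc, mul_left_comm] using this
  · have := (Real.hasDerivAt_sin t).const_mul r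
    simpa [orbit, HfV] using this
  · simpa [orbit, HfV] using (hasDerivAt_const t c₃)
  · have h1 : HasDerivAt (fun t : ℝ => t + θ) 1 t := (hasDerivAt_id t).add_const θ
    have := ((Real.hasDerivAt_cos (t + θ)).comp t h1).const_mul s
    simpa [orbit, HfV, mul_comm, mul_assoc, mul_left_comm] using this
  · have h1 : HasDerivAt (fun t : ℝ => t + θ) 1 t := (hasDerivAt_id t).add_const θ
    have := ((Real.hasDerivAt_sin (t + θ)).comp t h1).const_mul s
    simpa [orbit, HfV] using this
  · simpa [orbit, HfV] using (hasDerivAt_const t c₆)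

lemma integral_orbit_x1sq (r c₃ s θ c₆ : ℝ) :
    (∫ t in (0:ℝ)..(2 * Real.pi), (orbit r c₃ s θ c₆ t 0) ^ 2) = Real.pi * r ^ 2 := by
  have : ∀ t : ℝ, (orbit r c₃ s θ c₆ t 0) ^ 2 = r ^ 2 * Real.cos t ^ 2 := by
    intro t; simp [orbit]; ring
  simp only [this]
  rw [intervalIntegral.integral_const_mul, integral_cos_sq]
  simp [Real.sin_two_pi, Real.cos_two_pi]
  ring

/-- The integral of x₁² over one period of the closed orbit equals π r², which is
positive whenever r ≠ 0; consequently g = x₁² is not of the form H_f(h) for any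
smooth function h on ℝ⁶. -/
theorem integral_x1sq_positive_and_not_in_range :
    (∀ r c₃ s θ c₆ : ℝ,
      (∫ t in (0:ℝ)..(2 * Real.pi), (orbit r c₃ s θ c₆ t 0) ^ 2) = Real.pi * r ^ 2) ∧
    (∀ r : ℝ, r ≠ 0 → 0 < Real.pi * r ^ 2) ∧
    ¬ ∃ h : M6 → ℝ, ContDiff ℝ (⊤ : ℕ∞) h ∧ ∀ x : M6, (x 0) ^ 2 = ∑ i, HfV x i * pd i h x := by
  refine ⟨integral_orbit_x1sq, fun r hr => by positivity, ?_⟩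
  rintro ⟨h, hh, hEq⟩
  set γ : ℝ → M6 := orbit 1 0 0 0 0 with hγ
  have key : ∀ t : ℝ, HasDerivAt (fun t => h (γ t)) ((γ t 0) ^ 2) t := by
    intro t
    have hd : HasFDerivAt h (fderiv ℝ h (γ t)) (γ t) :=
      (hh.differentiable (by simp) (γ t)).hasFDerivAt
    have hc := hd.comp_hasDerivAt t (orbit_hasDerivAt 1 0 0 0 0 t)
    have : fderiv ℝ h (γ t) (HfV (γ t)) = (γ t 0) ^ 2 := by
      rw [clm_sum]
      exact (hEq (γ t)).symm
    rwa [this] at hc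
  have hcont : Continuous fun t => (γ t 0) ^ 2 := by
    have : ∀ t : ℝ, (γ t 0) ^ 2 = Real.cos t ^ 2 := by
      intro t; simp [hγ, orbit]
    simp only [this]
    fun_prop
  have hint : (∫ t in (0:ℝ)..(2 * Real.pi), (γ t 0) ^ 2)
      = h (γ (2 * Real.pi)) - h (γ 0) :=
    intervalIntegral.integral_eq_sub_of_hasDerivAt (fun t _ => key t)
      (hcont.intervalIntegrable 0 (2 * Real.pi))
  have hper : γ (2 * Real.pi) = γ 0 := by
    funext j
    fin_cases j <;> simp [hγ, orbit, Real.cos_two_pi, Real.sin_two_pi]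
  rw [hper, sub_self] at hint
  have := integral_orbit_x1sq 1 0 0 0 0
  rw [hγ] at hint
  rw [hint] at this
  simp at this
  exact Real.pi_ne_zero this.symm

end
end
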